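/- arXiv:2403.19247 — 3 statements merged into one kernel-verified Lean document; each statement's English description precedes it below -/
import Mathlib

section
/- Let C(α,β) be the 9×9 block matrix with 3×3 blocks: identity blocks on the diagonal, block (1,2) equal to A(α), block (1,3) equal to B(β), block (2,3) zero (and Hermitian conjugates elsewhere), where A(α) has α in position (3,1) and zeros elsewhere, and B(β) has β in position (1,1) and zeros elsewhere. Then the partial transpose of C(α,β) (transposing the second tensor factor of the 3⊗3 structure) has smallest eigenvalue 1 − √(|α|² + |β|²). -/
/-!
The partial transpose of `Cfam α β` is `1 + N`, where `N` only couples the basis vector `e₀₀`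
with `α e₁₂ + β e₂₀` (0-based indices). Writing `r = √(|α|² + |β|²)`, Cauchy–Schwarz and AM–GM
give `2 |Re (x̄₀₀ (α x₁₂ + β x₂₀))| ≤ r ‖x‖²`, so the quadratic form is at least `(1 - r) ‖x‖²`,
and `r e₀₀ - ᾱ e₁₂ - β̄ e₂₀` is an eigenvector for `1 - r`.
-/

/-- The 9×9 block matrix C(α,β) with identity diagonal blocks, block (1,2) = A(α)
(single entry α at position (3,1)), block (1,3) = B(β) (single entry β at (1,1)),
block (2,3) = 0, and Hermitian conjugate blocks elsewhere.  Indices are 0-based. -/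
def Cfam (α β : ℂ) : Matrix (Fin 3 × Fin 3) (Fin 3 × Fin 3) ℂ := fun p q =>
  if p.1 = q.1 then (if p.2 = q.2 then 1 else 0)
  else if p.1 = 0 ∧ q.1 = 1 then (if p.2 = 2 ∧ q.2 = 0 then α else 0)
  else if p.1 = 1 ∧ q.1 = 0 then (if p.2 = 0 ∧ q.2 = 2 then starRingEnd ℂ α else 0)
  else if p.1 = 0 ∧ q.1 = 2 then (if p.2 = 0 ∧ q.2 = 0 then β else 0)
  else if p.1 = 2 ∧ q.1 = 0 then (if p.2 = 0 ∧ q.2 = 0 then starRingEnd ℂ β else 0)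
  else 0

/-- Partial transpose on the second tensor factor. -/
def ptranspose (M : Matrix (Fin 3 × Fin 3) (Fin 3 × Fin 3) ℂ) :
    Matrix (Fin 3 × Fin 3) (Fin 3 × Fin 3) ℂ :=
  fun p q => M (p.1, q.2) (q.1, p.2)

open Matrix ComplexConjugate

namespace Matrix.IsHermitian

variable {𝕜 n : Type*} [RCLike 𝕜] [Fintype n] [DecidableEq n] {A : Matrix n n 𝕜}
  (hA : A.IsHermitian)

lemma le_eigenvalues_of_forall_le_re_dotProduct {μ : ℝ}
    (h : ∀ x : n → 𝕜, μ * ∑ j, ‖x j‖ ^ 2 ≤ RCLike.re (star x ⬝ᵥ A *ᵥ x)) (i : n) :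
    μ ≤ hA.eigenvalues i := by
  have hnorm : ∑ j, ‖hA.eigenvectorBasis i j‖ ^ 2 = 1 := by
    rw [← EuclideanSpace.norm_sq_eq, hA.eigenvectorBasis.orthonormal.1 i, one_pow]
  simpa [hnorm, ← hA.eigenvalues_eq] using h (hA.eigenvectorBasis i)

lemma exists_eigenvalues_eq_of_mulVec_eq_smul {μ : ℝ} {v : n → 𝕜} (hv : v ≠ 0)
    (hAv : A *ᵥ v = (μ : 𝕜) • v) : ∃ i, hA.eigenvalues i = μ := by
  have hμ : Module.End.HasEigenvalue (toLin' A) (μ : 𝕜) :=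
    Module.End.hasEigenvalue_of_hasEigenvector
      (Module.End.hasEigenvector_iff.2 ⟨Module.End.mem_eigenspace_iff.2 hAv, hv⟩)
  rw [Module.End.hasEigenvalue_iff_mem_spectrum, spectrum_toLin',
    hA.spectrum_eq_image_range] at hμ
  obtain ⟨_, ⟨i, rfl⟩, hi⟩ := hμ
  exact ⟨i, RCLike.ofReal_injective hi⟩

lemma iInf_eigenvalues_eq {μ : ℝ}
    (h : ∀ x : n → 𝕜, μ * ∑ j, ‖x j‖ ^ 2 ≤ RCLike.re (star x ⬝ᵥ A *ᵥ x))
    {v : n → 𝕜} (hv : v ≠ 0) (hAv : A *ᵥ v = (μ : 𝕜) • v) :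
    ⨅ i, hA.eigenvalues i = μ := by
  obtain ⟨i, hi⟩ := hA.exists_eigenvalues_eq_of_mulVec_eq_smul hv hAv
  have : Nonempty n := ⟨i⟩
  exact le_antisymm (hi ▸ ciInf_le (Finite.bddBelow_range _) i)
    (le_ciInf (hA.le_eigenvalues_of_forall_le_re_dotProduct h))

end Matrix.IsHermitian

lemma ptranspose_Cfam_mulVec_apply (α β : ℂ) (x : Fin 3 × Fin 3 → ℂ) (p : Fin 3 × Fin 3) :
    (ptranspose (Cfam α β) *ᵥ x) p = x p +
      if p = (0, 0) then α * x (1, 2) + β * x (2, 0)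
      else if p = (1, 2) then conj α * x (0, 0)
      else if p = (2, 0) then conj β * x (0, 0)
      else 0 := by
  fin_cases p <;>
    simp [mulVec, dotProduct, Fintype.sum_prod_type, Fin.sum_univ_three, ptranspose, Cfam] <;>
    ring

lemma re_star_dotProduct_ptranspose_Cfam_mulVec (α β : ℂ) (x : Fin 3 × Fin 3 → ℂ) :
    (star x ⬝ᵥ ptranspose (Cfam α β) *ᵥ x).re =
      ∑ p, ‖x p‖ ^ 2 + 2 * (conj (x (0, 0)) * (α * x (1, 2) + β * x (2, 0))).re := by
  simp only [dotProduct, Pi.star_apply, RCLike.star_def, ptranspose_Cfam_mulVec_apply,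
    Fintype.sum_prod_type, Prod.mk.injEq, Fin.sum_univ_three, and_true, Fin.reduceEq, and_false,
    ↓reduceIte, one_ne_zero, add_zero, zero_ne_one, Complex.add_re, Complex.mul_re,
    Complex.conj_re, Complex.conj_im, Complex.add_im, Complex.mul_im, Complex.sq_norm,
    Complex.normSq_apply]
  ring

lemma two_mul_mul_add_mul_le {a b c p q r : ℝ} (hr : 0 ≤ r) (hpq : p ^ 2 + q ^ 2 = r ^ 2) :
    2 * a * (p * b + q * c) ≤ r * (a ^ 2 + b ^ 2 + c ^ 2) := by
  rcases hr.eq_or_lt with rfl | hr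
  · obtain ⟨rfl, rfl⟩ : p = 0 ∧ q = 0 := by
      constructor <;> nlinarith [sq_nonneg p, sq_nonneg q]
    simp
  · -- `r` times the difference is `(r a - p b - q c)² + (p c - q b)²`
    nlinarith [sq_nonneg (r * a - p * b - q * c), sq_nonneg (p * c - q * b)]

lemma one_sub_sqrt_mul_le_re_star_dotProduct_ptranspose_Cfam_mulVec (α β : ℂ)
    (x : Fin 3 × Fin 3 → ℂ) :
    (1 - √(‖α‖ ^ 2 + ‖β‖ ^ 2)) * ∑ p, ‖x p‖ ^ 2 ≤
      (star x ⬝ᵥ ptranspose (Cfam α β) *ᵥ x).re := by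
  set r := √(‖α‖ ^ 2 + ‖β‖ ^ 2)
  set z := conj (x (0, 0)) * (α * x (1, 2) + β * x (2, 0))
  have hcross : -(r * (‖x (0, 0)‖ ^ 2 + ‖x (1, 2)‖ ^ 2 + ‖x (2, 0)‖ ^ 2)) ≤ 2 * z.re := by
    calc -(r * (‖x (0, 0)‖ ^ 2 + ‖x (1, 2)‖ ^ 2 + ‖x (2, 0)‖ ^ 2))
        ≤ -(2 * ‖x (0, 0)‖ * (‖α‖ * ‖x (1, 2)‖ + ‖β‖ * ‖x (2, 0)‖)) :=
          neg_le_neg <| two_mul_mul_add_mul_le (Real.sqrt_nonneg _)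
            (Real.sq_sqrt (by positivity)).symm
      _ ≤ -(2 * ‖z‖) := by
          rw [norm_mul, Complex.norm_conj, mul_assoc]
          gcongr
          exact (norm_add_le _ _).trans_eq (by rw [norm_mul, norm_mul])
      _ ≤ 2 * z.re := by linarith [neg_le_of_abs_le (Complex.abs_re_le_norm z)]
  have hsub : ‖x (0, 0)‖ ^ 2 + ‖x (1, 2)‖ ^ 2 + ‖x (2, 0)‖ ^ 2 ≤ ∑ p, ‖x p‖ ^ 2 := by
    calc _ = ∑ p ∈ {(0, 0), (1, 2), (2, 0)}, ‖x p‖ ^ 2 := by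
          simp [Finset.sum_insert, add_assoc]
      _ ≤ _ := Finset.sum_le_sum_of_subset_of_nonneg (Finset.subset_univ _)
          fun _ _ _ ↦ by positivity
  rw [re_star_dotProduct_ptranspose_Cfam_mulVec]
  linarith [mul_le_mul_of_nonneg_left hsub (Real.sqrt_nonneg (‖α‖ ^ 2 + ‖β‖ ^ 2))]

lemma exists_ptranspose_Cfam_mulVec_eq_smul (α β : ℂ) :
    ∃ v ≠ 0, ptranspose (Cfam α β) *ᵥ v = ((1 - √(‖α‖ ^ 2 + ‖β‖ ^ 2) : ℝ) : ℂ) • v := by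
  set r := √(‖α‖ ^ 2 + ‖β‖ ^ 2) with hr_def
  rcases eq_or_ne r 0 with hr | hr
  · -- the coordinate `(1, 1)` is not coupled to any other
    refine ⟨Pi.single (1, 1) 1, by simp, funext fun p ↦ ?_⟩
    fin_cases p <;> simp [ptranspose_Cfam_mulVec_apply, hr]
  · have hr2 : (r : ℂ) ^ 2 = α * conj α + β * conj β := by
      rw [Complex.mul_conj, Complex.mul_conj, Complex.normSq_eq_norm_sq,
        Complex.normSq_eq_norm_sq, hr_def, ← Complex.ofReal_pow, Real.sq_sqrt (by positivity)]
      push_cast; ring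
    refine ⟨fun p ↦ if p = (0, 0) then (r : ℂ) else if p = (1, 2) then -conj α
      else if p = (2, 0) then -conj β else 0, fun h ↦ hr ?_, funext fun p ↦ ?_⟩
    · simpa using congrFun h (0, 0)
    fin_cases p <;> simp [ptranspose_Cfam_mulVec_apply]
    · linear_combination hr2
    all_goals ring

theorem min_eigenvalue_partial_transpose_general (α β : ℂ)
    (h : (ptranspose (Cfam α β)).IsHermitian) :
    ⨅ i, h.eigenvalues i = 1 - Real.sqrt (‖α‖ ^ 2 + ‖β‖ ^ 2) := by
  obtain ⟨v, hv, hMv⟩ := exists_ptranspose_Cfam_mulVec_eq_smul α β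
  exact h.iInf_eigenvalues_eq
    (one_sub_sqrt_mul_le_re_star_dotProduct_ptranspose_Cfam_mulVec α β) hv hMv

theorem min_eigenvalue_partial_transpose (α β : ℂ)
    (hα : ‖α‖ ≤ 1) (hβ : ‖β‖ ≤ 1)
    (h : (ptranspose (Cfam α β)).IsHermitian) :
    ⨅ i, h.eigenvalues i = 1 - Real.sqrt (‖α‖ ^ 2 + ‖β‖ ^ 2) :=
  min_eigenvalue_partial_transpose_general α β h
end

section
/- With C(α,β) as above, the partial transpose of C(α,β) has a negative eigenvalue if and only if |α|² + |β|² > 1. -/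
/-!
Only the coordinates `(0,0)`, `(1,2)`, `(2,0)` are coupled by the partial transpose `Γ`: its
quadratic form is `∑ |x_p|² + 2 Re (conj x₀₀ (α x₁₂ + β x₂₀))`, i.e. the identity plus the
bordered block `[[1, w*], [w, I₂]]` with `w = (conj α, conj β)`. That block is positive
semidefinite iff its Schur complement `1 - ‖w‖² = 1 - |α|² - |β|²` is nonnegative, and a
Hermitian matrix has a negative eigenvalue iff it is not positive semidefinite.
-/

open Matrix
open scoped ComplexOrder ComplexConjugate InnerProductSpace

theorem Matrix.IsHermitian.exists_eigenvalues_neg_iff {n 𝕜 : Type*} [Fintype n] [DecidableEq n]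
    [RCLike 𝕜] {A : Matrix n n 𝕜} (hA : A.IsHermitian) :
    (∃ i, hA.eigenvalues i < 0) ↔ ¬A.PosSemidef := by
  simp [hA.posSemidef_iff_eigenvalues_nonneg, Pi.le_def]

open RCLike in
theorem norm_le_one_iff_forall_bordered_form_nonneg {𝕜 E : Type*} [RCLike 𝕜]
    [NormedAddCommGroup E] [InnerProductSpace 𝕜 E] (w : E) :
    ‖w‖ ≤ 1 ↔ ∀ (a : 𝕜) (y : E), 0 ≤ ‖a‖ ^ 2 + ‖y‖ ^ 2 + 2 * re (conj a * ⟪w, y⟫_𝕜) := by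
  constructor
  · intro hw a y
    have hcs : -(‖a‖ * ‖y‖) ≤ re (conj a * ⟪w, y⟫_𝕜) := calc
      -(‖a‖ * ‖y‖) ≤ -‖conj a * ⟪w, y⟫_𝕜‖ := by
        rw [norm_mul, norm_conj]
        gcongr
        exact (norm_inner_le_norm w y).trans (mul_le_of_le_one_left (norm_nonneg y) hw)
      _ ≤ re (conj a * ⟪w, y⟫_𝕜) := neg_le_of_abs_le (abs_re_le_norm _)
    nlinarith [sq_nonneg (‖a‖ - ‖y‖)]
  · intro h
    have hw := h 1 (-w)
    rw [map_one, one_mul, inner_neg_right, map_neg, inner_self_eq_norm_sq, norm_neg,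
      norm_one] at hw
    nlinarith [norm_nonneg w]

theorem dotProduct_mulVec_ptranspose_Cfam (α β : ℂ) (x : Fin 3 × Fin 3 → ℂ) :
    star x ⬝ᵥ (ptranspose (Cfam α β) *ᵥ x) =
      ((∑ p, ‖x p‖ ^ 2 + 2 * (conj (x (0, 0)) * (α * x (1, 2) + β * x (2, 0))).re : ℝ) : ℂ) := by
  rw [Complex.ofReal_add, Complex.ofReal_sum, ← Complex.add_conj]
  simp only [Complex.ofReal_pow, ← Complex.conj_mul', dotProduct, mulVec, ptranspose, Cfam,
    Fintype.sum_prod_type, Fin.sum_univ_succ, Fin.sum_univ_zero, Fin.isValue, Pi.star_apply,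
    RCLike.star_def, Fin.succ_zero_eq_one, Fin.succ_one_eq_two, Fin.succ_ne_zero,
    Fin.reduceEq, ↓reduceIte, one_ne_zero, zero_ne_one, and_true, true_and, and_false,
    false_and, ite_mul, ite_self, one_mul, zero_mul, add_zero, zero_add, map_mul, map_add,
    RingHomCompTriple.comp_apply, RingHom.id_apply]
  ring

theorem forall_dotProduct_mulVec_ptranspose_Cfam_nonneg_iff (α β : ℂ) :
    (∀ x, 0 ≤ star x ⬝ᵥ (ptranspose (Cfam α β) *ᵥ x)) ↔ ‖α‖ ^ 2 + ‖β‖ ^ 2 ≤ 1 := by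
  set w : EuclideanSpace ℂ (Fin 2) := !₂[conj α, conj β]
  have hw : ‖w‖ ^ 2 = ‖α‖ ^ 2 + ‖β‖ ^ 2 := by simp [w, EuclideanSpace.norm_sq_eq]
  have hinner (y : EuclideanSpace ℂ (Fin 2)) : ⟪w, y⟫_ℂ = α * y 0 + β * y 1 := by
    simp [w, EuclideanSpace.inner_eq_star_dotProduct, dotProduct, Fin.sum_univ_two, mul_comm]
  rw [← hw, sq_le_one_iff₀ (norm_nonneg _), norm_le_one_iff_forall_bordered_form_nonneg (𝕜 := ℂ)]
  simp_rw [dotProduct_mulVec_ptranspose_Cfam, Complex.zero_le_real, hinner]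
  constructor
  · intro hx a y
    let x : Fin 3 × Fin 3 → ℂ := fun p =>
      if p = (0, 0) then a else if p = (1, 2) then y 0 else if p = (2, 0) then y 1 else 0
    simpa [x, Fintype.sum_prod_type, Fin.sum_univ_succ, EuclideanSpace.norm_sq_eq, add_assoc]
      using hx x
  · intro hbordered x
    have hsum : ‖x (0, 0)‖ ^ 2 + ‖x (1, 2)‖ ^ 2 + ‖x (2, 0)‖ ^ 2 ≤ ∑ p, ‖x p‖ ^ 2 := by
      simpa [add_assoc] using
        Finset.sum_le_univ_sum_of_nonneg (s := {(0, 0), (1, 2), (2, 0)}) fun p ↦ sq_nonneg ‖x p‖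
    have hform := hbordered (x (0, 0)) !₂[x (1, 2), x (2, 0)]
    simp only [EuclideanSpace.norm_sq_eq, Fin.sum_univ_two, RCLike.re_to_complex,
      cons_val_zero, cons_val_one] at hform
    linarith

theorem partial_transpose_negative_eigenvalue_iff_general (α β : ℂ)
    (h : (ptranspose (Cfam α β)).IsHermitian) :
    (∃ i, h.eigenvalues i < 0) ↔ 1 < ‖α‖ ^ 2 + ‖β‖ ^ 2 := by
  rw [h.exists_eigenvalues_neg_iff, posSemidef_iff_dotProduct_mulVec, and_iff_right h,
    forall_dotProduct_mulVec_ptranspose_Cfam_nonneg_iff, not_le]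

theorem partial_transpose_negative_eigenvalue_iff (α β : ℂ)
    (hα : ‖α‖ ≤ 1) (hβ : ‖β‖ ≤ 1)
    (h : (ptranspose (Cfam α β)).IsHermitian) :
    (∃ i, h.eigenvalues i < 0) ↔ 1 < ‖α‖ ^ 2 + ‖β‖ ^ 2 :=
  partial_transpose_negative_eigenvalue_iff_general α β h
end

section
/- Let C be a 4×4 Gram matrix of the block form [[C₀₀, C₀₁],[C₀₁†, C₀₀]] that is separable, i.e., (1/4)C = Σᵢ pᵢ |ψᵢ⟩⟨ψᵢ| ⊗ |φᵢ⟩⟨φᵢ| for some probability distribution pᵢ and qubit pure states. If the two diagonal entries of C₀₁ are equal, then C = Σᵢ qᵢ C₁⁽ⁱ⁾ ⊗ C₂⁽ⁱ⁾ for some probability distribution qᵢ and 2×2 Gram matrices C₁⁽ⁱ⁾, C₂⁽ⁱ⁾. -/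
/-!
Let `Φ(A) = A + X Aᵀ X` with `X = σₓ`. On a qubit state with Bloch vector `r`, `Φ` gives
`I + r_x σ_x + r_y σ_y`, twice the state with `r` projected onto the x–y plane; hence `Φ` sends pure
states to 2×2 Gram matrices. Applying `Φ ⊗ Φ` to the separable decomposition of `C / 4` gives a
decomposition of `(Φ ⊗ Φ)(C) / 4` into tensor products of Gram matrices. Finally `Φ ⊗ Φ = (Φ ⊗ 1)(1 ⊗ Φ)`,
and `C` is fixed by `(Φ ⊗ 1) / 2` because its diagonal blocks are equal, and by `(1 ⊗ Φ) / 2` because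
every block has equal diagonal entries; so `(Φ ⊗ Φ)(C) = 4 C`.
-/

open scoped ComplexOrder Kronecker Matrix

namespace Matrix

variable {R : Type*} [CommRing R]

/-- `A + X Aᵀ X` for the Pauli matrix `X = σₓ`, written as a reindexing. -/
def xyProj (A : Matrix (Fin 2) (Fin 2) R) : Matrix (Fin 2) (Fin 2) R :=
  A + Aᵀ.submatrix (· + 1) (· + 1)

theorem xyProj_apply (A : Matrix (Fin 2) (Fin 2) R) (k l : Fin 2) :
    xyProj A k l = A k l + A (l + 1) (k + 1) := rfl

theorem xyProj_apply_self (A : Matrix (Fin 2) (Fin 2) R) (k : Fin 2) :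
    xyProj A k k = A.trace := by
  fin_cases k <;> simp [xyProj_apply, trace, Fin.sum_univ_two, add_comm]

theorem PosSemidef.xyProj [PartialOrder R] [StarRing R] [StarOrderedRing R]
    {A : Matrix (Fin 2) (Fin 2) R} (hA : A.PosSemidef) : (xyProj A).PosSemidef :=
  hA.add (hA.transpose.submatrix _)

def xyProjKron :
    Matrix (Fin 2 × Fin 2) (Fin 2 × Fin 2) R →ₗ[R] Matrix (Fin 2 × Fin 2) (Fin 2 × Fin 2) R where
  toFun M := of fun a b => M a b + M (b.1 + 1, a.2) (a.1 + 1, b.2) + M (a.1, b.2 + 1) (b.1, a.2 + 1)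
    + M (b.1 + 1, b.2 + 1) (a.1 + 1, a.2 + 1)
  map_add' M N := by ext; simp only [add_apply, of_apply]; ring
  map_smul' c M := by ext; simp only [smul_apply, of_apply, smul_eq_mul, RingHom.id_apply]; ring

theorem xyProjKron_kronecker (A B : Matrix (Fin 2) (Fin 2) R) :
    xyProjKron (A ⊗ₖ B) = xyProj A ⊗ₖ xyProj B := by
  ext ⟨k, k'⟩ ⟨l, l'⟩
  simp only [xyProjKron, LinearMap.coe_mk, AddHom.coe_mk, of_apply, kroneckerMap_apply,
    xyProj_apply]
  ring

theorem xyProjKron_eq_four_smul {M : Matrix (Fin 2 × Fin 2) (Fin 2 × Fin 2) R}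
    (hleft : ∀ k' l', M (0, k') (0, l') = M (1, k') (1, l'))
    (hright : ∀ k l, M (k, 0) (l, 0) = M (k, 1) (l, 1)) :
    xyProjKron M = (4 : R) • M := by
  -- for `k ≠ l` in `Fin 2` the swap `(k, l) ↦ (l + 1, k + 1)` is the identity
  have hleft' : ∀ k l k' l', M (l + 1, k') (k + 1, l') = M (k, k') (l, l') := by
    intro k l k' l'; fin_cases k <;> fin_cases l <;> simp [hleft]
  have hright' : ∀ k l k' l', M (k, l' + 1) (l, k' + 1) = M (k, k') (l, l') := by
    intro k l k' l'; fin_cases k' <;> fin_cases l' <;> simp [hright]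
  ext ⟨k, k'⟩ ⟨l, l'⟩
  simp only [xyProjKron, LinearMap.coe_mk, AddHom.coe_mk, of_apply, smul_apply, smul_eq_mul,
    hleft', hright']
  ring

end Matrix

open Matrix

theorem separable_fixed_diagonal_implies_tensor_gram_decomposition (n : ℕ)
    (C : Matrix (Fin 2 × Fin 2) (Fin 2 × Fin 2) ℂ)
    (hC : C.PosSemidef) (hCdiag : ∀ p, C p p = 1)
    -- block form [[C₀₀, C₀₁],[C₀₁†, C₀₀]]: equal diagonal blocks
    (hblock : ∀ k l, C (0, k) (0, l) = C (1, k) (1, l))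
    -- separability: (1/4)C = Σᵢ pᵢ |ψᵢ⟩⟨ψᵢ| ⊗ |φᵢ⟩⟨φᵢ|
    (p : Fin n → ℝ) (hp : ∀ i, 0 ≤ p i) (hpsum : ∑ i, p i = 1)
    (ψ φ : Fin n → (Fin 2 → ℂ))
    (hψ : ∀ i, dotProduct (star (ψ i)) (ψ i) = 1)
    (hφ : ∀ i, dotProduct (star (φ i)) (φ i) = 1)
    (hsep : (1 / 4 : ℂ) • C = ∑ i, (p i : ℂ) •
      (Matrix.vecMulVec (ψ i) (star (ψ i)) ⊗ₖ Matrix.vecMulVec (φ i) (star (φ i))))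
    -- equal diagonal entries of the off-diagonal block C₀₁
    (hfix : C (0, 0) (1, 0) = C (0, 1) (1, 1)) :
    ∃ (m : ℕ) (q : Fin m → ℝ) (C1 C2 : Fin m → Matrix (Fin 2) (Fin 2) ℂ),
      (∀ i, 0 ≤ q i) ∧ (∑ i, q i = 1) ∧
      (∀ i, (C1 i).PosSemidef ∧ ∀ k, C1 i k k = 1) ∧
      (∀ i, (C2 i).PosSemidef ∧ ∀ k, C2 i k k = 1) ∧
      C = ∑ i, (q i : ℂ) • (C1 i ⊗ₖ C2 i) := by
  have gram (v : Fin 2 → ℂ) (hv : star v ⬝ᵥ v = 1) :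
      (xyProj (vecMulVec v (star v))).PosSemidef ∧ ∀ k, xyProj (vecMulVec v (star v)) k k = 1 :=
    ⟨(posSemidef_vecMulVec_self_star v).xyProj, fun k => by
      rw [xyProj_apply_self, trace_vecMulVec, dotProduct_comm, hv]⟩
  have hblockDiag : ∀ k l, C (k, 0) (l, 0) = C (k, 1) (l, 1) := by
    have hfix' : C (1, 0) (0, 0) = C (1, 1) (0, 1) := by
      rw [← hC.1.apply (1, 0), ← hC.1.apply (1, 1), hfix]
    intro k l; fin_cases k <;> fin_cases l <;> simp [hCdiag, hfix, hfix']
  refine ⟨n, p, fun i => xyProj (vecMulVec (ψ i) (star (ψ i))),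
    fun i => xyProj (vecMulVec (φ i) (star (φ i))), hp, hpsum, fun i => gram _ (hψ i),
    fun i => gram _ (hφ i), ?_⟩
  calc C = xyProjKron ((1 / 4 : ℂ) • C) := by
        rw [map_smul, xyProjKron_eq_four_smul hblock hblockDiag, smul_smul]; norm_num
    _ = _ := by simp only [hsep, map_sum, map_smul, xyProjKron_kronecker]
end
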